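/- arXiv:1204.5252 — 2 statements merged into one kernel-verified Lean document; each statement's English description precedes it below -/
import Mathlib

section
/- Let ω = e^{2πi/3}. For every k ∈ ℂ with k ≠ 0 and k⁶ ≠ -1, the 3×3 complex matrix Z∞(k) with rows (-2/(3λ(k)), 0, 1/λ(k)), (1, 1/(3λ(k)), 0), (0, 1, 1/(3λ(k))) satisfies Z∞(k) · P(k) = P(k) · 𝒵(k), where 𝒵(k) = diag(z₁(k), z₂(k), z₃(k)). -/
open Complex

/-- The primitive cube root of unity `ω = e^{2πi/3}`. -/
noncomputable def ω : ℂ := Complex.exp (2 * Real.pi * Complex.I / 3)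

/-- `l_j(k) = (1/√3)(ω^j k + 1/(ω^j k))`. -/
noncomputable def lfun (j : ℕ) (k : ℂ) : ℂ :=
  (1 / (Real.sqrt 3 : ℂ)) * (ω ^ j * k + 1 / (ω ^ j * k))

/-- `λ(k) = (1/(3√3))(k³ + 1/k³)`. -/
noncomputable def lamfun (k : ℂ) : ℂ :=
  (1 / (3 * (Real.sqrt 3 : ℂ))) * (k ^ 3 + 1 / k ^ 3)

/-- `z_j(k) = √3 ((ω^j k)² + (ω^j k)⁻²)/(k³ + k⁻³)`. -/
noncomputable def zfun (j : ℕ) (k : ℂ) : ℂ :=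
  (Real.sqrt 3 : ℂ) * ((ω ^ j * k) ^ 2 + ((ω ^ j * k) ^ 2)⁻¹) / (k ^ 3 + (k ^ 3)⁻¹)

/-- The matrix `P(k)` with rows `(1,1,1)`, `(l₁,l₂,l₃)`, `(l₁²,l₂²,l₃²)`. -/
noncomputable def Pmat (k : ℂ) : Matrix (Fin 3) (Fin 3) ℂ :=
  !![1, 1, 1;
     lfun 1 k, lfun 2 k, lfun 3 k;
     (lfun 1 k) ^ 2, (lfun 2 k) ^ 2, (lfun 3 k) ^ 2]


lemma omega_pow_three : ω ^ 3 = 1 := by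
  rw [ω, ← Complex.exp_nat_mul]
  rw [show (3 : ℕ) * (2 * (Real.pi : ℂ) * Complex.I / 3) = 2 * Real.pi * Complex.I by
    push_cast; ring]
  exact Complex.exp_two_pi_mul_I

lemma omega_ne_zero : ω ≠ 0 := Complex.exp_ne_zero _

lemma aux1 (s t k : ℂ) (hs2 : s^2 = 3) (hs : s ≠ 0) (ht : t ≠ 0) (hk : k ≠ 0)
    (ht3 : t^3 = k^3) (h6 : k^6 + 1 ≠ 0) :
    -2/(3 * ((1/(3*s)) * (k^3 + 1/k^3))) + (1/((1/(3*s)) * (k^3 + 1/k^3))) * ((1/s)*(t + 1/t))^2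
      = (s * (t^2 + (t^2)⁻¹) / (k^3 + (k^3)⁻¹)) := by
  have hk3 : k^3 ≠ 0 := pow_ne_zero _ hk
  have hD : k^3 * k^3 + 1 ≠ 0 := by intro h; exact h6 (by linear_combination h)
  field_simp
  linear_combination (-(t^2+1)^2) * hs2

lemma aux2 (s t k : ℂ) (hs : s ≠ 0) (ht : t ≠ 0) (hk : k ≠ 0)
    (ht3 : t^3 = k^3) (h6 : k^6 + 1 ≠ 0) :
    1 + (1/(3 * ((1/(3*s)) * (k^3 + 1/k^3)))) * ((1/s)*(t + 1/t))
      = ((1/s)*(t + 1/t)) * (s * (t^2 + (t^2)⁻¹) / (k^3 + (k^3)⁻¹)) := by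
  have hk3 : k^3 ≠ 0 := pow_ne_zero _ hk
  have hD : k^3 * k^3 + 1 ≠ 0 := by intro h; exact h6 (by linear_combination h)
  field_simp
  rw [← ht3]
  linear_combination (-t^3*(t^3+k^3)) * ht3

lemma aux3 (s t k : ℂ) (hs : s ≠ 0) (ht : t ≠ 0) (hk : k ≠ 0)
    (ht3 : t^3 = k^3) (h6 : k^6 + 1 ≠ 0) :
    ((1/s)*(t + 1/t)) + (1/(3 * ((1/(3*s)) * (k^3 + 1/k^3)))) * ((1/s)*(t + 1/t))^2
      = ((1/s)*(t + 1/t))^2 * (s * (t^2 + (t^2)⁻¹) / (k^3 + (k^3)⁻¹)) := by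
  have hk3 : k^3 ≠ 0 := pow_ne_zero _ hk
  have hD : k^3 * k^3 + 1 ≠ 0 := by intro h; exact h6 (by linear_combination h)
  field_simp
  rw [← ht3]
  linear_combination (-(t^3+t^5)*(t^3+k^3)) * ht3

/-- `Z∞(k) P(k) = P(k) 𝒵(k)` where `𝒵(k) = diag(z₁(k), z₂(k), z₃(k))`. -/
theorem Zinfty_diagonalization (k : ℂ) (hk : k ≠ 0) (hk6 : k ^ 6 ≠ -1) :
    (!![-2 / (3 * lamfun k), 0, 1 / lamfun k;
        1, 1 / (3 * lamfun k), 0;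
        0, 1, 1 / (3 * lamfun k)] : Matrix (Fin 3) (Fin 3) ℂ) * Pmat k
      = Pmat k * Matrix.diagonal ![zfun 1 k, zfun 2 k, zfun 3 k] := by
  have hs2 : ((Real.sqrt 3 : ℝ) : ℂ)^2 = 3 := by
    have : (Real.sqrt 3)^2 = 3 := Real.sq_sqrt (by norm_num)
    exact_mod_cast this
  have hs : ((Real.sqrt 3 : ℝ) : ℂ) ≠ 0 :=
    Complex.ofReal_ne_zero.mpr (ne_of_gt (Real.sqrt_pos.mpr (by norm_num)))
  have h6 : k^6 + 1 ≠ 0 := by intro h; exact hk6 (by linear_combination h)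
  have ht : ∀ j : ℕ, ω ^ j * k ≠ 0 := fun j =>
    mul_ne_zero (pow_ne_zero _ omega_ne_zero) hk
  have ht3 : ∀ j : ℕ, (ω ^ j * k)^3 = k^3 := by
    intro j
    rw [mul_pow, ← pow_mul, mul_comm j 3, pow_mul, omega_pow_three, one_pow, one_mul]
  have r1 : ∀ j : ℕ, -2/(3 * lamfun k) + (1/lamfun k) * (lfun j k)^2 = zfun j k := fun j =>
    aux1 _ _ _ hs2 hs (ht j) hk (ht3 j) h6
  have r2 : ∀ j : ℕ, 1 + (1/(3 * lamfun k)) * lfun j k = lfun j k * zfun j k := fun j =>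
    aux2 _ _ _ hs (ht j) hk (ht3 j) h6
  have r3 : ∀ j : ℕ, lfun j k + (1/(3 * lamfun k)) * (lfun j k)^2 = (lfun j k)^2 * zfun j k :=
    fun j => aux3 _ _ _ hs (ht j) hk (ht3 j) h6
  ext i j
  fin_cases i <;> fin_cases j <;>
    simp [Matrix.mul_apply, Fin.sum_univ_three, Pmat, Matrix.diagonal] <;>
    [linear_combination r1 1; linear_combination r1 2; linear_combination r1 3;
     linear_combination r2 1; linear_combination r2 2; linear_combination r2 3;
     linear_combination r3 1; linear_combination r3 2; linear_combination r3 3]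
end

section
/- Let ω = e^{2πi/3} and K₁ = e^{πi/6}. For all complex numbers u and v, the 3×3 matrix M with rows (v, -u, 0), (u, 0, -u), (v, 0, -v) satisfies M · P(K₁) = P(K₁) · 𝒱, where 𝒱 is the off-diagonal matrix with rows (0, (v-u)/2, 0), (u+v, 0, v-u), (0, (u+v)/2, 0). (Here M is the matrix appearing in the definition of V₂ evaluated at λ = 0, with u playing the role of u(x,t) and v the role of u_x(x,t); since P(K₁) is invertible this gives P(K₁)⁻¹ M P(K₁) = 𝒱, i.e. the leading term of V₂ at K₁ is off-diagonal.) -/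
open Complex

lemma key (j : ℕ) : lfun j (Complex.exp (Real.pi * Complex.I / 6))
    = (2 / (Real.sqrt 3 : ℂ)) * Real.cos ((4 * j + 1) * Real.pi / 6) := by
  have h1 : ω ^ j * Complex.exp (Real.pi * Complex.I / 6)
      = Complex.exp ((((4 * j + 1) * Real.pi / 6 : ℝ) : ℂ) * Complex.I) := by
    rw [ω, ← Complex.exp_nat_mul, ← Complex.exp_add]
    congr 1
    push_cast
    ring
  rw [lfun, h1, one_div (Complex.exp _), ← Complex.exp_neg, ← neg_mul,
    show Complex.exp ((((4 * j + 1) * Real.pi / 6 : ℝ) : ℂ) * Complex.I)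
      + Complex.exp (-(((4 * j + 1) * Real.pi / 6 : ℝ) : ℂ) * Complex.I)
      = 2 * Complex.cos (((4 * j + 1) * Real.pi / 6 : ℝ) : ℂ) by
        rw [Complex.cos]; ring]
  rw [← Complex.ofReal_cos]
  ring

lemma sqrt3_ne : (Real.sqrt 3 : ℂ) ≠ 0 := by
  simp [Real.sqrt_eq_zero']

lemma l1 : lfun 1 (Complex.exp (Real.pi * Complex.I / 6)) = -1 := by
  rw [key]
  have : ((4 * (1:ℕ) + 1) * Real.pi / 6 : ℝ) = Real.pi - Real.pi / 6 := by push_cast; ring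
  rw [this, Real.cos_pi_sub, Real.cos_pi_div_six]
  have h3 : (Real.sqrt 3 : ℂ) * Real.sqrt 3 = 3 := by
    rw [← Complex.ofReal_mul, Real.mul_self_sqrt (by norm_num)]; norm_num
  push_cast
  field_simp [sqrt3_ne]


lemma l2 : lfun 2 (Complex.exp (Real.pi * Complex.I / 6)) = 0 := by
  rw [key]
  have : ((4 * (2:ℕ) + 1) * Real.pi / 6 : ℝ) = Real.pi + Real.pi / 2 := by push_cast; ring
  rw [this, Real.cos_add, Real.cos_pi, Real.sin_pi, Real.cos_pi_div_two]
  simp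

lemma l3 : lfun 3 (Complex.exp (Real.pi * Complex.I / 6)) = 1 := by
  rw [key]
  have : ((4 * (3:ℕ) + 1) * Real.pi / 6 : ℝ) = Real.pi / 6 + 2 * Real.pi := by push_cast; ring
  rw [this, Real.cos_add_two_pi, Real.cos_pi_div_six]
  have h3 : (Real.sqrt 3 : ℂ) * Real.sqrt 3 = 3 := by
    rw [← Complex.ofReal_mul, Real.mul_self_sqrt (by norm_num)]; norm_num
  push_cast
  field_simp [sqrt3_ne]


/-- With `K₁ = e^{πi/6}`, the matrix `M` with rows `(v,-u,0)`, `(u,0,-u)`, `(v,0,-v)`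
satisfies `M P(K₁) = P(K₁) 𝒱`, where `𝒱` is off-diagonal with rows
`(0,(v-u)/2,0)`, `(u+v,0,v-u)`, `(0,(u+v)/2,0)`. -/
theorem V2_leading_term_offdiagonal (u v : ℂ) :
    (!![v, -u, 0;
        u, 0, -u;
        v, 0, -v] : Matrix (Fin 3) (Fin 3) ℂ) * Pmat (Complex.exp (Real.pi * Complex.I / 6))
      = Pmat (Complex.exp (Real.pi * Complex.I / 6)) *
        !![0, (v - u) / 2, 0;
           u + v, 0, v - u;
           0, (u + v) / 2, 0] := by
  rw [Pmat, l1, l2, l3]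
  ext i j
  fin_cases i <;> fin_cases j <;>
    simp [Matrix.mul_apply, Fin.sum_univ_three, Matrix.vecHead, Matrix.vecTail] <;> ring
end
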